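/- There exists an absolute constant c for which the following holds. Let X be a normed space, let 𝒰 ⊂ X be a finite set of cardinality N, and let A > 0. Assume that for every positive integer L and every tuple (u₁,…,u_L) ∈ 𝒰^L, E_ε ‖Σ_{j=1}^L ε_j u_j‖_X ≤ A√L, where (ε_j)_{j=1}^L is a Rademacher vector. Then for every u > 0, log N(conv(𝒰), ‖·‖_X, u) ≤ c (A/u)² log N. -/

import Mathlib

open MeasureTheory ProbabilityTheory Set Pointwise

noncomputable section

namespace Paper

/-- Euclidean (ℓ₂) norm of a finitely-indexed complex vector. -/
def euclNorm {ι : Type*} [Fintype ι] (x : ι → ℂ) : ℝ :=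
  Real.sqrt (∑ i, ‖x i‖ ^ 2)

/-- Operator norm ‖A‖₂→₂ of a complex matrix. -/
def opNorm {ι κ : Type*} [Fintype ι] [Fintype κ] (A : Matrix ι κ ℂ) : ℝ :=
  ⨆ x : {x : κ → ℂ // euclNorm x ≤ 1}, euclNorm (A.mulVec x)

/-- Frobenius norm of a complex matrix. -/
def frobNorm {ι κ : Type*} [Fintype ι] [Fintype κ] (A : Matrix ι κ ℂ) : ℝ :=
  Real.sqrt (∑ i, ∑ j, ‖A i j‖ ^ 2)

/-- Radius of a set of matrices in the Frobenius norm. -/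
def dF {ι κ : Type*} [Fintype ι] [Fintype κ] (𝒜 : Set (Matrix ι κ ℂ)) : ℝ :=
  sSup (frobNorm '' 𝒜)

/-- Radius of a set of matrices in the operator norm. -/
def dOp {ι κ : Type*} [Fintype ι] [Fintype κ] (𝒜 : Set (Matrix ι κ ℂ)) : ℝ :=
  sSup (opNorm '' 𝒜)

/-- Distance (with respect to a distance function `d`) from a point to a set. -/
def setDist {X : Type*} (d : X → X → ℝ) (x : X) (S : Set X) : ℝ :=
  sInf (d x '' S)

/-- Talagrand's γ₂-functional of a set `T` with respect to a distance function `d`: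
the infimum over admissible sequences `𝒯` of `sup_{t ∈ T} ∑_r 2^{r/2} d(t, 𝒯 r)`. -/
def gamma2 {X : Type*} (d : X → X → ℝ) (T : Set X) : ℝ :=
  sInf { c : ℝ | ∃ 𝒯 : ℕ → Set X, (∀ r, 𝒯 r ⊆ T) ∧ (∀ r, (𝒯 r).Finite) ∧
    (𝒯 0).ncard = 1 ∧ (∀ r, (𝒯 r).ncard ≤ 2 ^ 2 ^ r) ∧
    c = ⨆ t ∈ T, ∑' r : ℕ, (2 : ℝ) ^ ((r : ℝ) / 2) * setDist d t (𝒯 r) }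

/-- γ₂-functional of a set of matrices with respect to the operator norm. -/
def gamma2Op {ι κ : Type*} [Fintype ι] [Fintype κ] (𝒜 : Set (Matrix ι κ ℂ)) : ℝ :=
  gamma2 (fun A B => opNorm (A - B)) 𝒜

/-- Restricted isometry constant of order `s`: the smallest `δ ≥ 0` such that
`(1-δ)‖x‖₂² ≤ ‖Φx‖₂² ≤ (1+δ)‖x‖₂²` for all `s`-sparse `x`. -/
def ripConst {ι κ : Type*} [Fintype ι] [Fintype κ] (s : ℕ) (Φ : Matrix ι κ ℂ) : ℝ :=
  sInf {δ : ℝ | 0 ≤ δ ∧ ∀ x : κ → ℂ, {j | x j ≠ 0}.ncard ≤ s →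
    (1 - δ) * euclNorm x ^ 2 ≤ euclNorm (Φ.mulVec x) ^ 2 ∧
    euclNorm (Φ.mulVec x) ^ 2 ≤ (1 + δ) * euclNorm x ^ 2}

/-- A Rademacher vector: independent coordinates, each uniform on {−1, 1}. -/
def IsRademacher {Ωp : Type*} [MeasurableSpace Ωp] (μ : Measure Ωp) {ι : Type*}
    (ε : Ωp → ι → ℝ) : Prop :=
  (∀ i, Measurable fun ω => ε ω i) ∧
  iIndepFun (fun i ω => ε ω i) μ ∧
  ∀ i, μ.map (fun ω => ε ω i) =
    (2⁻¹ : ENNReal) • Measure.dirac (1 : ℝ) + (2⁻¹ : ENNReal) • Measure.dirac (-1 : ℝ)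

/-- A standard Gaussian vector: independent standard normal coordinates. -/
def IsStdGaussian {Ωp : Type*} [MeasurableSpace Ωp] (μ : Measure Ωp) {ι : Type*}
    (g : Ωp → ι → ℝ) : Prop :=
  (∀ i, Measurable fun ω => g ω i) ∧
  iIndepFun (fun i ω => g ω i) μ ∧
  ∀ i, μ.map (fun ω => g ω i) = gaussianReal 0 1

/-- A random vector whose entries are independent, mean-zero, variance-one,
`L`-subgaussian real random variables. -/
def HasSubgaussianEntries {Ωp : Type*} [MeasurableSpace Ωp] (μ : Measure Ωp) {ι : Type*}
    (L : ℝ) (ξ : Ωp → ι → ℝ) : Prop :=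
  (∀ i, Measurable fun ω => ξ ω i) ∧
  iIndepFun (fun i ω => ξ ω i) μ ∧
  (∀ i, ∫ ω, ξ ω i ∂μ = 0) ∧
  (∀ i, ∫ ω, (ξ ω i) ^ 2 ∂μ = 1) ∧
  ∀ i, ∀ t : ℝ, 0 < t →
    μ {ω | t ≤ |ξ ω i|} ≤ ENNReal.ofReal (2 * Real.exp (-(t ^ 2) / (2 * L ^ 2)))

/-- The standard inner product on a finitely-indexed complex coordinate space. -/
def cInner {ι : Type*} [Fintype ι] (x y : ι → ℂ) : ℂ :=
  ∑ i, starRingEnd ℂ (x i) * y i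

/-- An isotropic `L`-subgaussian random vector on ℂⁿ. -/
def IsIsotropicSubgaussian {Ωp : Type*} [MeasurableSpace Ωp] (μ : Measure Ωp) {ι : Type*}
    [Fintype ι] (L : ℝ) (ξ : Ωp → ι → ℂ) : Prop :=
  Measurable ξ ∧
  (∫ ω, ξ ω ∂μ = 0) ∧
  (∀ θ : ι → ℂ, euclNorm θ = 1 → ∫ ω, ‖cInner (ξ ω) θ‖ ^ 2 ∂μ = 1) ∧
  ∀ θ : ι → ℂ, euclNorm θ = 1 → ∀ t : ℝ, 0 < t →
    μ {ω | t ≤ ‖cInner (ξ ω) θ‖} ≤ ENNReal.ofReal (2 * Real.exp (-(t ^ 2) / (2 * L ^ 2)))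

/-- `ξ'` is an independent copy of `ξ`. -/
def IsIndepCopy {Ωp : Type*} [MeasurableSpace Ωp] (μ : Measure Ωp) {E : Type*}
    [MeasurableSpace E] (ξ ξ' : Ωp → E) : Prop :=
  IndepFun ξ ξ' μ ∧ μ.map ξ' = μ.map ξ

/-- The partial circulant matrix `Φ x = m^{-1/2} R_Ω (ξ * x)` generated by `ξ` with
sampling set `Ω` of cardinality `m`. -/
def partialCirculant {n m : ℕ} (Ω : Finset (Fin n)) (hΩ : Ω.card = m) (ξ : Fin n → ℝ) :
    Matrix (Fin m) (Fin n) ℂ :=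
  Matrix.of fun i k =>
    (((Real.sqrt m)⁻¹ * ξ (((Ω.orderIsoOfFin hΩ i : Ω) : Fin n) - k) : ℝ) : ℂ)

/-- The time-frequency shift `π(k, ℓ) = Mˡ Tᵏ` on ℂᵐ, as an `m × m` matrix. -/
def tfShift (m : ℕ) (k l : Fin m) : Matrix (Fin m) (Fin m) ℂ :=
  Matrix.of fun j j' =>
    if j' = j - k then Complex.exp (2 * Real.pi * Complex.I * (l : ℕ) * (j : ℕ) / m) else 0

/-- The Gabor synthesis matrix generated by `h ∈ ℂᵐ`, whose column indexed by
`λ = (k, ℓ) ∈ ℤ_m²` is `π(λ) h`. -/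
def gaborMatrix {m : ℕ} (h : Fin m → ℂ) : Matrix (Fin m) (Fin m × Fin m) ℂ :=
  Matrix.of fun j lam =>
    Complex.exp (2 * Real.pi * Complex.I * (lam.2 : ℕ) * (j : ℕ) / m) * h (j - lam.1)

/-- `V_x = m^{-1/2} ∑_λ x_λ π(λ)`. -/
def gaborV {m : ℕ} (x : Fin m × Fin m → ℂ) : Matrix (Fin m) (Fin m) ℂ :=
  (((Real.sqrt m)⁻¹ : ℝ) : ℂ) • ∑ lam : Fin m × Fin m, x lam • tfShift m lam.1 lam.2

/-- Covering number: the minimal cardinality of a set of centers of open balls of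
radius `u` (w.r.t. the distance function `d`) covering `S`. -/
def coveringNumber {X : Type*} (d : X → X → ℝ) (S : Set X) (u : ℝ) : ℕ :=
  sInf {k : ℕ | ∃ C : Finset X, C.card = k ∧ ∀ x ∈ S, ∃ c ∈ C, d x c < u}

/-!
Maurey's empirical method. Write `x ∈ conv 𝒰` as `∑ qᵢ φᵢ` with `φᵢ ∈ 𝒰` and sample `L`
indices independently from `q`, i.e. weight `f : Fin L → ι` by `∏ⱼ q (f j)`. Comparing the
sample with an independent copy (Jensen), and then exchanging coordinates of the two samples
(which preserves the weight of the pair but puts an arbitrary sign on each coordinate of their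
difference), bounds the expected distance from the sample sum to `L • x` by twice the expected
Rademacher average, hence by `2A√L`. So some average of `L` points of `𝒰` is `2A/√L`-close to
`x`; there are at most `N ^ L` such averages, and `L ≈ (2A/u)²` gives `c = 8`. For `u > A` the
hull lies in a single ball around `0`.
-/

lemma sum_sum_mul_mul_add {α : Type*} [Fintype α] {w : α → ℝ} (hw : ∑ a, w a = 1)
    (F : α → ℝ) : ∑ a, ∑ b, w a * w b * (F a + F b) = 2 * ∑ a, w a * F a := by
  have split : ∀ a b, w a * w b * (F a + F b) = w b * (w a * F a) + w a * (w b * F b) := by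
    intros; ring
  simp only [split, Finset.sum_add_distrib, ← Finset.sum_mul, ← Finset.mul_sum, hw]
  ring

lemma exists_le_of_sum_mul_le {α : Type*} [Fintype α] {w F : α → ℝ} (hw0 : ∀ a, 0 ≤ w a)
    (hw1 : ∑ a, w a = 1) {B : ℝ} (h : ∑ a, w a * F a ≤ B) : ∃ a, F a ≤ B := by
  have : Nonempty α := by
    by_contra hempty
    simp [not_nonempty_iff.1 hempty] at hw1
  obtain ⟨a₀, ha₀⟩ := Finite.exists_min F
  refine ⟨a₀, ?_⟩
  calc F a₀ = ∑ a, w a * F a₀ := by rw [← Finset.sum_mul, hw1, one_mul]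
    _ ≤ ∑ a, w a * F a := by gcongr with a; exacts [hw0 a, ha₀ a]
    _ ≤ B := h

lemma log_le_mul_log_of_le_pow {k N L : ℕ} (h : k ≤ N ^ L) : Real.log k ≤ L * Real.log N := by
  rcases k.eq_zero_or_pos with rfl | hk
  · simpa using mul_nonneg L.cast_nonneg (Real.log_natCast_nonneg N)
  · calc Real.log k ≤ Real.log ((N : ℝ) ^ L) :=
          Real.log_le_log (by positivity) (by exact_mod_cast h)
      _ = L * Real.log N := Real.log_pow _ _

lemma exists_nat_lt_le_two_mul {r : ℝ} (hr : 1 ≤ r) : ∃ L : ℕ, r < L ∧ (L : ℝ) ≤ 2 * r :=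
  ⟨⌊r⌋₊ + 1, by exact_mod_cast Nat.lt_floor_add_one r,
    by push_cast; linarith [Nat.floor_le (zero_le_one.trans hr)]⟩

section ProductWeight

variable {ι κ : Type*} [Fintype κ]

def prodWeight (q : ι → ℝ) (f : κ → ι) : ℝ :=
  ∏ k, q (f k)

lemma prodWeight_nonneg {q : ι → ℝ} (hq : ∀ i, 0 ≤ q i) (f : κ → ι) : 0 ≤ prodWeight q f :=
  Finset.prod_nonneg fun k _ => hq (f k)

variable [Fintype ι] [DecidableEq κ]

lemma sum_prodWeight {q : ι → ℝ} (hq : ∑ i, q i = 1) : ∑ f : κ → ι, prodWeight q f = 1 := by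
  simp only [prodWeight, ← Fintype.prod_sum, hq, Finset.prod_const_one]

lemma sum_prodWeight_smul_apply {E : Type*} [AddCommGroup E] [Module ℝ E] {q : ι → ℝ}
    (hq : ∑ i, q i = 1) (φ : ι → E) (k : κ) :
    ∑ f : κ → ι, prodWeight q f • φ (f k) = ∑ i, q i • φ i := by
  rw [← (Equiv.funSplitAt k ι).symm.sum_comp, Fintype.sum_prod_type]
  refine Finset.sum_congr rfl fun i _ => ?_
  have split : ∀ g, prodWeight q ((Equiv.funSplitAt k ι).symm (i, g)) = q i * prodWeight q g := by
    intro g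
    rw [prodWeight, Fintype.prod_eq_mul_prod_subtype_ne _ k]
    congr 1
    · simp [Equiv.funSplitAt, Equiv.piSplitAt]
    · exact Fintype.prod_congr _ _ fun j => by simp [Equiv.funSplitAt, Equiv.piSplitAt, j.2]
  simp [split, ← Finset.sum_smul, ← Finset.mul_sum, sum_prodWeight hq]

end ProductWeight

def rademacherMean {κ X : Type*} [Fintype κ] [DecidableEq κ] [SeminormedAddCommGroup X]
    [Module ℝ X] (v : κ → X) : ℝ :=
  ((2 : ℝ) ^ Fintype.card κ)⁻¹ * ∑ σ : κ → Bool, ‖∑ k, (if σ k then (1 : ℝ) else -1) • v k‖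

section Symmetrization

variable {ι κ X : Type*}

def swapOn (σ : κ → Bool) (p : (κ → ι) × (κ → ι)) : (κ → ι) × (κ → ι) :=
  (fun k => if σ k then p.1 k else p.2 k, fun k => if σ k then p.2 k else p.1 k)

lemma swapOn_involutive (σ : κ → Bool) : Function.Involutive (swapOn (ι := ι) σ) := by
  intro p
  ext k <;> by_cases h : σ k <;> simp [swapOn, h]

variable [Fintype κ] [SeminormedAddCommGroup X] [NormedSpace ℝ X] {q : ι → ℝ}

lemma prodWeight_swapOn (σ : κ → Bool) (p : (κ → ι) × (κ → ι)) :
    prodWeight q (swapOn σ p).1 * prodWeight q (swapOn σ p).2 =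
      prodWeight q p.1 * prodWeight q p.2 := by
  simp only [prodWeight, swapOn, ← Finset.prod_mul_distrib]
  exact Fintype.prod_congr _ _ fun k => by by_cases h : σ k <;> simp [h, mul_comm]

lemma sum_sub_sum_swapOn (φ : ι → X) (σ : κ → Bool) (p : (κ → ι) × (κ → ι)) :
    ∑ k, φ ((swapOn σ p).1 k) - ∑ k, φ ((swapOn σ p).2 k) =
      ∑ k, (if σ k then (1 : ℝ) else -1) • (φ (p.1 k) - φ (p.2 k)) := by
  rw [← Finset.sum_sub_distrib]
  exact Fintype.sum_congr _ _ fun k => by by_cases h : σ k <;> simp [swapOn, h]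

variable [Fintype ι] [DecidableEq κ]

lemma sum_pair_mul_norm_sub_eq_signed (φ : ι → X) (σ : κ → Bool) :
    ∑ p : (κ → ι) × (κ → ι),
        prodWeight q p.1 * prodWeight q p.2 * ‖∑ k, φ (p.1 k) - ∑ k, φ (p.2 k)‖ =
      ∑ p : (κ → ι) × (κ → ι), prodWeight q p.1 * prodWeight q p.2 *
        ‖∑ k, (if σ k then (1 : ℝ) else -1) • (φ (p.1 k) - φ (p.2 k))‖ := by
  rw [← Equiv.sum_comp (swapOn_involutive σ).toPerm]
  exact Fintype.sum_congr _ _ fun p => by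
    simp only [Function.Involutive.coe_toPerm, prodWeight_swapOn, sum_sub_sum_swapOn]

lemma sum_pair_mul_norm_sub_le_signed (hq0 : ∀ i, 0 ≤ q i) (hq1 : ∑ i, q i = 1) (φ : ι → X)
    (σ : κ → Bool) :
    ∑ p : (κ → ι) × (κ → ι),
        prodWeight q p.1 * prodWeight q p.2 * ‖∑ k, φ (p.1 k) - ∑ k, φ (p.2 k)‖ ≤
      2 * ∑ f : κ → ι, prodWeight q f * ‖∑ k, (if σ k then (1 : ℝ) else -1) • φ (f k)‖ := by
  rw [sum_pair_mul_norm_sub_eq_signed φ σ]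
  calc _ ≤ ∑ p : (κ → ι) × (κ → ι), prodWeight q p.1 * prodWeight q p.2 *
        (‖∑ k, (if σ k then (1 : ℝ) else -1) • φ (p.1 k)‖ +
          ‖∑ k, (if σ k then (1 : ℝ) else -1) • φ (p.2 k)‖) := by
        gcongr with p
        · exact mul_nonneg (prodWeight_nonneg hq0 _) (prodWeight_nonneg hq0 _)
        · simp only [smul_sub, Finset.sum_sub_distrib]
          exact norm_sub_le _ _
    _ = _ := by
        rw [Fintype.sum_prod_type]
        exact sum_sum_mul_mul_add (sum_prodWeight hq1)
          fun f => ‖∑ k, (if σ k then (1 : ℝ) else -1) • φ (f k)‖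

lemma sum_pair_mul_norm_sub_le (hq0 : ∀ i, 0 ≤ q i) (hq1 : ∑ i, q i = 1) (φ : ι → X) :
    ∑ p : (κ → ι) × (κ → ι),
        prodWeight q p.1 * prodWeight q p.2 * ‖∑ k, φ (p.1 k) - ∑ k, φ (p.2 k)‖ ≤
      2 * ∑ f : κ → ι, prodWeight q f * rademacherMean fun k => φ (f k) := by
  have card_signs : (Fintype.card (κ → Bool) : ℝ) = 2 ^ Fintype.card κ := by simp
  calc _ = ((2 : ℝ) ^ Fintype.card κ)⁻¹ * ∑ _σ : κ → Bool, ∑ p : (κ → ι) × (κ → ι),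
          prodWeight q p.1 * prodWeight q p.2 * ‖∑ k, φ (p.1 k) - ∑ k, φ (p.2 k)‖ := by
        rw [Finset.sum_const, Finset.card_univ, nsmul_eq_mul, card_signs,
          inv_mul_cancel_left₀ (by positivity)]
    _ ≤ ((2 : ℝ) ^ Fintype.card κ)⁻¹ * ∑ σ : κ → Bool, 2 * ∑ f : κ → ι,
          prodWeight q f * ‖∑ k, (if σ k then (1 : ℝ) else -1) • φ (f k)‖ := by
        gcongr with σ
        exact sum_pair_mul_norm_sub_le_signed hq0 hq1 φ σ
    _ = _ := by
        simp only [rademacherMean, Finset.mul_sum]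
        rw [Finset.sum_comm]
        exact Finset.sum_congr rfl fun f _ => Finset.sum_congr rfl fun σ _ => by ring

end Symmetrization

section Maurey

variable {ι κ X : Type*} [Fintype ι] [Fintype κ] [DecidableEq κ]
  [SeminormedAddCommGroup X] [NormedSpace ℝ X] {q : ι → ℝ}

lemma sum_prodWeight_smul_sum (hq1 : ∑ i, q i = 1) (φ : ι → X) :
    ∑ g : κ → ι, prodWeight q g • ∑ k, φ (g k) = (Fintype.card κ : ℝ) • ∑ i, q i • φ i := by
  calc _ = ∑ k, ∑ g : κ → ι, prodWeight q g • φ (g k) := by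
        rw [Finset.sum_comm]
        simp only [Finset.smul_sum]
    _ = _ := by
        simp only [sum_prodWeight_smul_apply hq1, Finset.sum_const, Finset.card_univ,
          Nat.cast_smul_eq_nsmul]

lemma norm_sum_sub_card_smul_le (hq0 : ∀ i, 0 ≤ q i) (hq1 : ∑ i, q i = 1) (φ : ι → X)
    (f : κ → ι) :
    ‖∑ k, φ (f k) - (Fintype.card κ : ℝ) • ∑ i, q i • φ i‖ ≤
      ∑ g : κ → ι, prodWeight q g * ‖∑ k, φ (f k) - ∑ k, φ (g k)‖ := by
  have average : ∑ k, φ (f k) - (Fintype.card κ : ℝ) • ∑ i, q i • φ i =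
      ∑ g : κ → ι, prodWeight q g • (∑ k, φ (f k) - ∑ k, φ (g k)) := by
    simp only [smul_sub, Finset.sum_sub_distrib, ← Finset.sum_smul, sum_prodWeight hq1, one_smul,
      sum_prodWeight_smul_sum hq1]
  rw [average]
  refine (norm_sum_le _ _).trans_eq (Fintype.sum_congr _ _ fun g => ?_)
  rw [norm_smul, Real.norm_of_nonneg (prodWeight_nonneg hq0 g)]

lemma sum_prodWeight_mul_norm_sub_le (hq0 : ∀ i, 0 ≤ q i) (hq1 : ∑ i, q i = 1) (φ : ι → X) :
    ∑ f : κ → ι, prodWeight q f * ‖∑ k, φ (f k) - (Fintype.card κ : ℝ) • ∑ i, q i • φ i‖ ≤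
      2 * ∑ f : κ → ι, prodWeight q f * rademacherMean fun k => φ (f k) :=
  calc _ ≤ ∑ f : κ → ι, prodWeight q f *
        ∑ g : κ → ι, prodWeight q g * ‖∑ k, φ (f k) - ∑ k, φ (g k)‖ := by
        gcongr with f
        · exact prodWeight_nonneg hq0 f
        · exact norm_sum_sub_card_smul_le hq0 hq1 φ f
    _ = ∑ p : (κ → ι) × (κ → ι),
        prodWeight q p.1 * prodWeight q p.2 * ‖∑ k, φ (p.1 k) - ∑ k, φ (p.2 k)‖ := by
        simp only [Fintype.sum_prod_type, Finset.mul_sum, mul_assoc]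
    _ ≤ _ := sum_pair_mul_norm_sub_le hq0 hq1 φ

theorem exists_sum_sub_card_smul_le_of_mem_convexHull {𝒰 : Set X} {B : ℝ}
    (hB : ∀ v : κ → X, (∀ k, v k ∈ 𝒰) → rademacherMean v ≤ B) {x : X}
    (hx : x ∈ convexHull ℝ 𝒰) :
    ∃ v : κ → X, (∀ k, v k ∈ 𝒰) ∧ ‖∑ k, v k - (Fintype.card κ : ℝ) • x‖ ≤ 2 * B := by
  obtain ⟨ι, _, q, φ, hq0, hq1, hφ, rfl⟩ := mem_convexHull_iff_exists_fintype.1 hx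
  have mean_le : ∑ f : κ → ι, prodWeight q f * rademacherMean (fun k => φ (f k)) ≤ B :=
    calc _ ≤ ∑ f : κ → ι, prodWeight q f * B := by
          gcongr with f
          · exact prodWeight_nonneg hq0 f
          · exact hB _ fun k => hφ (f k)
      _ = B := by rw [← Finset.sum_mul, sum_prodWeight hq1, one_mul]
  obtain ⟨f, hf⟩ := exists_le_of_sum_mul_le (B := 2 * B) (prodWeight_nonneg hq0)
    (sum_prodWeight hq1) ((sum_prodWeight_mul_norm_sub_le hq0 hq1 φ).trans (by linarith))
  exact ⟨fun k => φ (f k), fun k => hφ (f k), hf⟩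

end Maurey

lemma coveringNumber_le_card {X : Type*} {d : X → X → ℝ} {S : Set X} {u : ℝ} (C : Finset X)
    (hC : ∀ x ∈ S, ∃ c ∈ C, d x c < u) : coveringNumber d S u ≤ C.card :=
  Nat.sInf_le ⟨C, rfl, hC⟩

section Covering

variable {X : Type*} [SeminormedAddCommGroup X] [NormedSpace ℝ X]

lemma rademacherMean_fin_one (v : Fin 1 → X) : rademacherMean v = ‖v 0‖ := by
  simp [rademacherMean, apply_ite (‖·‖)]

lemma coveringNumber_convexHull_le_one {𝒰 : Set X} {A u : ℝ} (hA : ∀ v ∈ 𝒰, ‖v‖ ≤ A)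
    (hAu : A < u) : coveringNumber (fun a b => ‖a - b‖) (convexHull ℝ 𝒰) u ≤ 1 := by
  have hball : convexHull ℝ 𝒰 ⊆ Metric.ball 0 u :=
    convexHull_min (fun v hv => mem_ball_zero_iff.2 ((hA v hv).trans_lt hAu)) (convex_ball 0 u)
  refine coveringNumber_le_card {0} fun x hx => ⟨0, Finset.mem_singleton_self 0, ?_⟩
  simpa using hball hx

theorem coveringNumber_convexHull_le_pow {𝒰 : Finset X} {A u : ℝ} (hu : 0 < u) {L : ℕ}
    (hL : (2 * A / u) ^ 2 < L)
    (hA : ∀ v : Fin L → X, (∀ j, v j ∈ 𝒰) → rademacherMean v ≤ A * √L) :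
    coveringNumber (fun a b => ‖a - b‖) (convexHull ℝ (𝒰 : Set X)) u ≤ 𝒰.card ^ L := by
  classical
  have hL0 : (0 : ℝ) < L := (sq_nonneg _).trans_lt hL
  let C := Finset.univ.image fun v : Fin L → 𝒰 => (L : ℝ)⁻¹ • ∑ j, (v j : X)
  calc _ ≤ C.card := coveringNumber_le_card C fun x hx => ?_
    _ ≤ Fintype.card (Fin L → 𝒰) := Finset.card_image_le
    _ = 𝒰.card ^ L := by simp
  obtain ⟨v, hv𝒰, hv⟩ := exists_sum_sub_card_smul_le_of_mem_convexHull hA hx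
  refine ⟨_, Finset.mem_image_of_mem _ (Finset.mem_univ fun j => ⟨v j, hv𝒰 j⟩), ?_⟩
  have rescale : x - (L : ℝ)⁻¹ • ∑ j, v j = -((L : ℝ)⁻¹ • (∑ j, v j - (L : ℝ) • x)) := by
    rw [smul_sub, inv_smul_smul₀ hL0.ne', neg_sub]
  calc ‖x - (L : ℝ)⁻¹ • ∑ j, v j‖ = (L : ℝ)⁻¹ * ‖∑ j, v j - (L : ℝ) • x‖ := by
        rw [rescale, norm_neg, norm_smul, Real.norm_of_nonneg (inv_nonneg.2 hL0.le)]
    _ ≤ (L : ℝ)⁻¹ * (2 * (A * √L)) := by gcongr; simpa using hv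
    _ = 2 * A / √L := by
        field_simp
        rw [Real.sq_sqrt hL0.le]
        ring
    _ < u := by
        rw [div_lt_iff₀ (Real.sqrt_pos.2 hL0), mul_comm u, ← div_lt_iff₀ hu]
        exact Real.lt_sqrt_of_sq_lt hL

end Covering

/-- Lemma 4.2 (Maurey): covering number bound for convex hulls. -/
theorem maurey_covering :
    ∃ c : ℝ, 0 < c ∧
      ∀ (X : Type) [NormedAddCommGroup X] [NormedSpace ℝ X]
        (𝒰 : Finset X) (N : ℕ) (A : ℝ), 𝒰.card = N →
      (∀ L : ℕ, 0 < L → ∀ u : Fin L → X, (∀ j, u j ∈ 𝒰) →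
        ((2 : ℝ) ^ L)⁻¹ * ∑ σ : Fin L → Bool, ‖∑ j, (if σ j then (1 : ℝ) else -1) • u j‖ ≤
          A * Real.sqrt L) →
      ∀ u : ℝ, 0 < u →
        Real.log (coveringNumber (fun a b => ‖a - b‖)
            (convexHull ℝ (𝒰 : Set X)) u) ≤
          c * (A / u) ^ 2 * Real.log N := by
  refine ⟨8, by norm_num, fun X _ _ 𝒰 N A hN hyp u hu => ?_⟩
  have hmean : ∀ L : ℕ, 0 < L → ∀ v : Fin L → X, (∀ j, v j ∈ 𝒰) → rademacherMean v ≤ A * √L := by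
    simpa only [rademacherMean, Fintype.card_fin] using hyp
  suffices ∃ L : ℕ, coveringNumber (fun a b => ‖a - b‖) (convexHull ℝ (𝒰 : Set X)) u ≤ N ^ L ∧
      (L : ℝ) ≤ 8 * (A / u) ^ 2 by
    obtain ⟨L, hcov, hL⟩ := this
    calc _ ≤ L * Real.log N := log_le_mul_log_of_le_pow hcov
      _ ≤ _ := by gcongr
  rcases lt_or_ge A u with hAu | huA
  · have hnorm : ∀ v ∈ (𝒰 : Set X), ‖v‖ ≤ A := fun v hv => by
      simpa [rademacherMean_fin_one] using hmean 1 one_pos (fun _ => v) fun _ => hv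
    exact ⟨0, by simpa using coveringNumber_convexHull_le_one hnorm hAu, by simp; positivity⟩
  · have hr : 1 ≤ (2 * A / u) ^ 2 := one_le_pow₀ ((one_le_div hu).2 (by linarith))
    obtain ⟨L, hrL, hL⟩ := exists_nat_lt_le_two_mul hr
    have hL0 : 0 < L := by exact_mod_cast (zero_lt_one.trans_le hr).trans hrL
    refine ⟨L, hN ▸ coveringNumber_convexHull_le_pow hu hrL (hmean L hL0), ?_⟩
    linarith [show 2 * (2 * A / u) ^ 2 = 8 * (A / u) ^ 2 by ring]

end Paper
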